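/- (Weibull approximation for maxima of uniform variables) For each integer n ≥ 1, let X_1, …, X_n be i.i.d. uniform random variables on [a, b), where a < b are reals, and let α > 0. Then for all x < 0, | P( X_(n) ≤ −(−x)^α (b − a)/n + b ) − exp(−(−x)^α) | ≤ (log n)/n + 1/n. -/

import Mathlib

/-!
The maximum is below `y` iff every `Xᵢ` is, so by independence its distribution function is
`F(y)ⁿ`. At `y = b - (c/n)(b - a)` with `c = (-x)^α`, the uniform distribution function equals
`max (1 - c/n) 0`, and the whole statement reduces to the quantitative limit
`|(1 - c/n)ⁿ - e^{-c}| ≤ c² e^{-c} / n`, which follows from `1 - s ≤ e^{-s}`,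
`e^{-s}(1 - s²) ≤ 1 - s` and Bernoulli's inequality; finally `c² e^{-c} ≤ 1`.
-/

open MeasureTheory ProbabilityTheory Real

noncomputable def uniformCDF (a b y : ℝ) : ℝ :=
  if y < a then 0 else if y < b then (y - a) / (b - a) else 1

lemma uniformCDF_sub_mul {a b s : ℝ} (hab : a < b) (hs : 0 ≤ s) :
    uniformCDF a b (b - s * (b - a)) = max (1 - s) 0 := by
  have hba : 0 < b - a := sub_pos.mpr hab
  unfold uniformCDF
  rcases lt_or_ge 1 s with hs1 | hs1
  · rw [if_pos (by nlinarith), max_eq_right (by linarith)]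
  · rw [if_neg (by nlinarith), max_eq_left (by linarith)]
    rcases hs.eq_or_lt with rfl | hs0
    · simp
    · rw [if_pos (by nlinarith)]
      field_simp
      ring

namespace ProbabilityTheory

lemma iIndepFun.measure_forall_le_eq_prod {Ω ι : Type*} [MeasurableSpace Ω] [Fintype ι]
    {P : Measure Ω} {X : ι → Ω → ℝ} (hindep : iIndepFun X P) (y : ℝ) :
    P {ω | ∀ i, X i ω ≤ y} = ∏ i, P {ω | X i ω ≤ y} := by
  have hset : {ω | ∀ i, X i ω ≤ y} = ⋂ i, X i ⁻¹' Set.Iic y := by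
    ext ω
    simp
  rw [hset, hindep.meas_iInter fun i => ⟨Set.Iic y, measurableSet_Iic, rfl⟩]
  rfl

end ProbabilityTheory

lemma exp_neg_mul_one_sub_sq_le_one_sub {s : ℝ} (hs : s ≤ 1) :
    exp (-s) * (1 - s ^ 2) ≤ 1 - s := by
  rw [exp_neg, inv_mul_le_iff₀ (exp_pos s)]
  have := add_one_le_exp s
  nlinarith

lemma exp_neg_mul_one_sub_sq_div_le_one_sub_div_pow {n : ℕ} {t : ℝ} (hn : 0 < n) (ht : 0 ≤ t)
    (htn : t ≤ n) : exp (-t) * (1 - t ^ 2 / n) ≤ (1 - t / n) ^ n := by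
  have hn' : (0 : ℝ) < n := by exact_mod_cast hn
  set s := t / n with hs
  have hs0 : 0 ≤ s := by positivity
  have hs1 : s ≤ 1 := (div_le_one hn').mpr htn
  have hexp : exp (-t) = exp (-s) ^ n := by
    rw [← exp_nat_mul, hs]
    field_simp
  have hbernoulli : 1 - t ^ 2 / n ≤ (1 - s ^ 2) ^ n := by
    have h := one_add_mul_le_pow (a := -s ^ 2) (by nlinarith) n
    calc 1 - t ^ 2 / n = 1 + n * -s ^ 2 := by rw [hs]; field_simp; ring
      _ ≤ _ := by simpa [sub_eq_add_neg] using h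
  calc exp (-t) * (1 - t ^ 2 / n) ≤ exp (-s) ^ n * (1 - s ^ 2) ^ n := by
        rw [hexp]; gcongr
    _ = (exp (-s) * (1 - s ^ 2)) ^ n := (mul_pow _ _ _).symm
    _ ≤ (1 - s) ^ n := by
        gcongr
        · exact mul_nonneg (exp_nonneg _) (by nlinarith)
        · exact exp_neg_mul_one_sub_sq_le_one_sub hs1

lemma abs_max_one_sub_div_pow_sub_exp_neg_le {n : ℕ} {t : ℝ} (hn : 0 < n) (ht : 0 ≤ t) :
    |max (1 - t / n) 0 ^ n - exp (-t)| ≤ t ^ 2 * exp (-t) / n := by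
  have hn' : (0 : ℝ) < n := by exact_mod_cast hn
  rcases le_or_gt t n with htn | htn
  · rw [max_eq_left (by rw [sub_nonneg, div_le_one hn']; exact htn),
      abs_sub_comm, abs_of_nonneg (by linarith [one_sub_div_pow_le_exp_neg htn])]
    have := exp_neg_mul_one_sub_sq_div_le_one_sub_div_pow hn ht htn
    have : exp (-t) * (1 - t ^ 2 / n) = exp (-t) - t ^ 2 * exp (-t) / n := by ring
    linarith
  · have hmax : max (1 - t / n) 0 = 0 :=
      max_eq_right (by rw [sub_nonpos, le_div_iff₀ hn']; linarith)
    have hnt : (n : ℝ) ≤ t ^ 2 := by nlinarith [(Nat.one_le_cast (α := ℝ)).mpr hn]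
    rw [hmax, zero_pow hn.ne', zero_sub, abs_neg, abs_of_pos (exp_pos _), le_div_iff₀ hn']
    nlinarith [exp_pos (-t)]

lemma sq_mul_exp_neg_le_one {c : ℝ} (hc : 0 ≤ c) : c ^ 2 * exp (-c) ≤ 1 := by
  -- `c ≤ (1 + c/4)² ≤ e^{c/2}`
  have hhalf : c ≤ exp (c / 2) := by
    have h := pow_le_pow_left₀ (by linarith) (add_one_le_exp (c / 4)) 2
    rw [← exp_nat_mul, show ((2 : ℕ) : ℝ) * (c / 4) = c / 2 by ring] at h
    nlinarith [sq_nonneg (1 - c / 4)]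
  rw [exp_neg, mul_inv_le_iff₀ (exp_pos c), one_mul]
  calc c ^ 2 ≤ exp (c / 2) ^ 2 := pow_le_pow_left₀ hc hhalf 2
    _ = exp c := by rw [← exp_nat_mul]; ring_nf

theorem weibull_approx_max_uniform_general {Ω : Type*} [MeasurableSpace Ω] (P : Measure Ω)
    [IsProbabilityMeasure P] (n : ℕ) (hn : 1 ≤ n) (a b : ℝ) (hab : a < b) (α : ℝ)
    (X : Fin n → Ω → ℝ)
    (hcdf : ∀ i y, P {ω | X i ω ≤ y} =
      ENNReal.ofReal (if y < a then 0 else if y < b then (y - a) / (b - a) else 1))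
    (hindep : iIndepFun X P) :
    ∀ x : ℝ, x < 0 →
      |(P {ω | ∀ i, X i ω ≤ -(-x) ^ α * (b - a) / n + b}).toReal - Real.exp (-(-x) ^ α)|
        ≤ Real.log n / n + 1 / n := by
  intro x hx
  set c := (-x) ^ α
  have hc : 0 ≤ c := rpow_nonneg (by linarith) α
  have hn' : 0 < n := hn
  have hF : ∀ i, P {ω | X i ω ≤ -c * (b - a) / n + b} =
      ENNReal.ofReal (max (1 - c / n) 0) := by
    intro i
    rw [hcdf, show -c * (b - a) / n + b = b - c / n * (b - a) by ring]
    exact congrArg ENNReal.ofReal (uniformCDF_sub_mul hab (by positivity))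
  have hprob :
      (P {ω | ∀ i, X i ω ≤ -c * (b - a) / n + b}).toReal = max (1 - c / n) 0 ^ n := by
    rw [hindep.measure_forall_le_eq_prod, Finset.prod_congr rfl fun i _ => hF i,
      Finset.prod_const, Finset.card_univ, Fintype.card_fin, ENNReal.toReal_pow,
      ENNReal.toReal_ofReal (by positivity)]
  calc _ = |max (1 - c / n) 0 ^ n - exp (-c)| := by rw [hprob]
    _ ≤ c ^ 2 * exp (-c) / n := abs_max_one_sub_div_pow_sub_exp_neg_le hn' hc
    _ ≤ 1 / n := by gcongr; exact sq_mul_exp_neg_le_one hc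
    _ ≤ log n / n + 1 / n := le_add_of_nonneg_left (by positivity)

/-- **Weibull approximation for maxima of uniform variables.** If `X₁, …, Xₙ` are i.i.d.
uniform random variables on `[a, b)` with `a < b`, and `α > 0`, then for all `x < 0`,
`|P(X₍ₙ₎ ≤ −(−x)^α (b−a)/n + b) − exp(−(−x)^α)| ≤ (log n)/n + 1/n`. -/
theorem weibull_approx_max_uniform {Ω : Type*} [MeasurableSpace Ω] (P : Measure Ω)
    [IsProbabilityMeasure P] (n : ℕ) (hn : 1 ≤ n) (a b : ℝ) (hab : a < b) (α : ℝ) (hα : 0 < α)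
    (X : Fin n → Ω → ℝ)
    (hmeas : ∀ i, Measurable (X i))
    (hcdf : ∀ i y, P {ω | X i ω ≤ y} =
      ENNReal.ofReal (if y < a then 0 else if y < b then (y - a) / (b - a) else 1))
    (hindep : iIndepFun X P) :
    ∀ x : ℝ, x < 0 →
      |(P {ω | ∀ i, X i ω ≤ -(-x) ^ α * (b - a) / n + b}).toReal - Real.exp (-(-x) ^ α)|
        ≤ Real.log n / n + 1 / n :=
  weibull_approx_max_uniform_general P n hn a b hab α X hcdf hindep
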